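/- Let k ≥ 0, d ≥ 1 be integers, N > k+1, n = N^d, and C > 0. Let f : [0,1]^d → ℝ be such that for every j ∈ {1,…,d} and every x_{-j} in the (d−1)-dimensional lattice {1/N,…,1}^{d−1}, the univariate slice φ_{j,x_{-j}} : [0,1] → ℝ, t ↦ f evaluated with the j-th coordinate equal to t and the other coordinates equal to x_{-j}, is k times differentiable with k-th derivative of bounded variation, and assume Σ_{j=1}^d Σ_{x_{-j}} TV( φ_{j,x_{-j}}^{(k)} ; [0,1] ) ≤ C, where TV denotes univariate total variation. Let θ_f ∈ ℝ^n be the restriction of f to the lattice Z_{n,d} = {1/N,…,1}^d. Then ‖D_{n,d}^{(k+1)} θ_f‖₁ ≤ c₁ C, for a constant c₁ > 0 depending only on k and d. -/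

import Mathlib

open scoped BigOperators ENNReal NNReal
open MeasureTheory ProbabilityTheory Matrix

noncomputable section

/-- Univariate forward difference matrix `D^{(1)}_M ∈ ℝ^{(M-1)×M}`, with entries
`(D^{(1)}_M)_{i,i} = -1`, `(D^{(1)}_M)_{i,i+1} = 1` and `0` otherwise. -/
def D1 (M : ℕ) : Matrix (Fin (M - 1)) (Fin M) ℝ :=
  Matrix.of fun i j => if (j : ℕ) = (i : ℕ) then -1 else if (j : ℕ) = (i : ℕ) + 1 then 1 else 0

/-- Univariate difference operator of order `m` on `N` points:
`D^{(0)}_N = I_N` and `D^{(m+1)}_N = D^{(1)}_{N-m} D^{(m)}_N`.  In particular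
`Dop N (k+1)` is the operator `D_N^{(k+1)} ∈ ℝ^{(N-k-1) × N}`. -/
def Dop (N : ℕ) : (m : ℕ) → Matrix (Fin (N - m)) (Fin N) ℝ
  | 0 => Matrix.of fun i j => if (i : ℕ) = (j : ℕ) then 1 else 0
  | m + 1 => D1 (N - m) * Dop N m

/-- Row index type of the order-`m` KTF penalty matrix: a coordinate direction `j`,
a row index of the univariate operator, and the values of the other `d-1` lattice
coordinates. -/
abbrev KtfIdx (N d m : ℕ) :=
  Σ j : Fin d, Fin (N - m) × ({l : Fin d // l ≠ j} → Fin N)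

/-- Order-`m` KTF penalty matrix on the lattice `{1,…,N}^d`: the vertical block
concatenation over coordinate directions `j` of `I_N ⊗ ⋯ ⊗ D^{(m)}_N ⊗ ⋯ ⊗ I_N`
(`D^{(m)}_N` in the `j`-th factor). -/
def ktfMat (N d m : ℕ) : Matrix (KtfIdx N d m) (Fin d → Fin N) ℝ :=
  Matrix.of fun p x =>
    Dop N m p.2.1 (x p.1) *
      ∏ l : {l : Fin d // l ≠ p.1}, (if p.2.2 l = x l.1 then (1:ℝ) else 0)

/-!
Along an axis-parallel lattice line, the rows of `I ⊗ ⋯ ⊗ D_N^{(k+1)} ⊗ ⋯ ⊗ I` applied to `θ_f`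
are the forward differences `Δ_h^{k+1} φ((i + 1) h)` of the slice `φ`, with step `h = 1/N`.
Since `Δ_h ψ (x) = ∫₀ʰ ψ' (x + s) ds` and `Δ_h` commutes with this averaging,
`Δ_h^{m+1} ψ (x) = ∫₀ʰ Δ_h^m ψ' (x + s) ds`. By induction on `m`, the sum of `|Δ_h^{m+1} ψ|` over
consecutive lattice points is therefore at most `h^m TV(ψ^{(m)})`; for `m = 0` this is the
definition of total variation. Summing over all slices gives the claim with `c₁ = 1`.
-/

open Set intervalIntegral Topology

section FwdDiffIntegral

variable {u v h : ℝ}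

theorem BoundedVariationOn.integrableOn_Icc {g : ℝ → ℝ} (hg : BoundedVariationOn g (Icc u v)) :
    IntegrableOn g (Icc u v) := by
  obtain ⟨p, q, hp, hq, rfl⟩ := hg.locallyBoundedVariationOn.exists_monotoneOn_sub_monotoneOn
  exact (hp.integrableOn_isCompact isCompact_Icc).sub (hq.integrableOn_isCompact isCompact_Icc)

theorem MeasureTheory.IntegrableOn.intervalIntegrable_comp_add {g : ℝ → ℝ}
    (hg : IntegrableOn g (Icc u v)) {x : ℝ} (hh : 0 ≤ h) (hx : u ≤ x) (hxh : x + h ≤ v) :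
    IntervalIntegrable (fun s => g (x + s)) volume 0 h := by
  have hsub : IntervalIntegrable g volume x (x + h) :=
    (intervalIntegrable_iff_integrableOn_Icc_of_le (by linarith)).2
      (hg.mono_set (Icc_subset_Icc hx hxh))
  simpa using hsub.comp_add_left x

theorem MeasureTheory.IntegrableOn.intervalIntegrable_comp_add_nat_mul {g : ℝ → ℝ}
    (hg : IntegrableOn g (Icc u v)) {x : ℝ} {n k : ℕ} (hh : 0 ≤ h) (hx : u ≤ x)
    (hxn : x + (n + 1) * h ≤ v) (hk : k ≤ n) :
    IntervalIntegrable (fun s => g (x + k * h + s)) volume 0 h := by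
  have : (k : ℝ) ≤ n := by exact_mod_cast hk
  exact hg.intervalIntegrable_comp_add hh (by nlinarith) (by nlinarith)

theorem MeasureTheory.IntegrableOn.intervalIntegrable_fwdDiff_iter {g : ℝ → ℝ}
    (hg : IntegrableOn g (Icc u v)) {x : ℝ} {n : ℕ} (hh : 0 ≤ h) (hx : u ≤ x)
    (hxn : x + (n + 1) * h ≤ v) :
    IntervalIntegrable (fun s => (fwdDiff h)^[n] g (x + s)) volume 0 h := by
  have hshift : ∀ k ∈ Finset.range (n + 1),
      IntervalIntegrable (fun s => g (x + k * h + s)) volume 0 h := fun k hk =>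
    hg.intervalIntegrable_comp_add_nat_mul hh hx hxn (Nat.lt_succ_iff.1 (Finset.mem_range.1 hk))
  have := IntervalIntegrable.sum _ fun k hk => (hshift k hk).const_mul
    (((-1 : ℤ) ^ (n - k) * n.choose k : ℤ) : ℝ)
  refine this.congr fun s _ => ?_
  simp [fwdDiff_iter_eq_sum_shift, add_right_comm]

theorem fwdDiff_iter_eq_integral {f g : ℝ → ℝ} (hg : IntegrableOn g (Icc u v)) {x : ℝ} {n : ℕ}
    (hh : 0 ≤ h) (hx : u ≤ x) (hxn : x + (n + 1) * h ≤ v)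
    (hf : ∀ k ≤ n, f (x + k * h) = ∫ s in (0 : ℝ)..h, g (x + k * h + s)) :
    (fwdDiff h)^[n] f x = ∫ s in (0 : ℝ)..h, (fwdDiff h)^[n] g (x + s) := by
  have hshift : ∀ k ∈ Finset.range (n + 1),
      IntervalIntegrable (fun s => g (x + k * h + s)) volume 0 h := fun k hk =>
    hg.intervalIntegrable_comp_add_nat_mul hh hx hxn (Nat.lt_succ_iff.1 (Finset.mem_range.1 hk))
  have hcomm : ∀ s : ℝ, ∀ k : ℕ, x + s + k * h = x + k * h + s := fun _ _ => by ring
  simp_rw [fwdDiff_iter_eq_sum_shift, zsmul_eq_mul, nsmul_eq_mul, hcomm]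
  rw [integral_finsetSum fun k hk => (hshift k hk).const_mul _]
  refine Finset.sum_congr rfl fun k hk => ?_
  rw [intervalIntegral.integral_const_mul, hf k (Nat.lt_succ_iff.1 (Finset.mem_range.1 hk))]

theorem fwdDiff_eq_integral_derivWithin {ψ : ℝ → ℝ} (hψ : DifferentiableOn ℝ ψ (Icc u v))
    (hψ' : IntegrableOn (derivWithin ψ (Icc u v)) (Icc u v)) {y : ℝ}
    (hh : 0 ≤ h) (hy : u ≤ y) (hyh : y + h ≤ v) :
    fwdDiff h ψ y = ∫ s in (0 : ℝ)..h, derivWithin ψ (Icc u v) (y + s) := by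
  rw [integral_comp_add_left, add_zero, integral_eq_sub_of_hasDerivAt_of_le (by linarith)
    (hψ.continuousOn.mono (Icc_subset_Icc hy hyh)) (fun z hz => ?_)
    ((intervalIntegrable_iff_integrableOn_Icc_of_le (by linarith)).2
      (hψ'.mono_set (Icc_subset_Icc hy hyh)))]
  · rfl
  have hz' : Icc u v ∈ 𝓝 z := Icc_mem_nhds (hy.trans_lt hz.1) (hz.2.trans_le hyh)
  rw [derivWithin_of_mem_nhds hz']
  exact ((hψ z (mem_of_mem_nhds hz')).differentiableAt hz').hasDerivAt

theorem sum_abs_intervalIntegral_le {ι : Type*} {s : Finset ι} {F : ι → ℝ → ℝ} {B : ℝ}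
    (hh : 0 ≤ h) (hF : ∀ i ∈ s, IntervalIntegrable (F i) volume 0 h)
    (hB : ∀ t ∈ Icc 0 h, ∑ i ∈ s, |F i t| ≤ B) :
    ∑ i ∈ s, |∫ t in (0 : ℝ)..h, F i t| ≤ h * B := by
  calc ∑ i ∈ s, |∫ t in (0 : ℝ)..h, F i t|
      ≤ ∑ i ∈ s, ∫ t in (0 : ℝ)..h, |F i t| :=
        Finset.sum_le_sum fun i _ => abs_integral_le_integral_abs hh
    _ = ∫ t in (0 : ℝ)..h, ∑ i ∈ s, |F i t| :=
        (integral_finsetSum fun i hi => (hF i hi).abs).symm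
    _ ≤ ∫ _ in (0 : ℝ)..h, B :=
        integral_mono_on hh ((IntervalIntegrable.sum s fun i hi => (hF i hi).abs).congr
          (fun t _ => by simp)) intervalIntegrable_const hB
    _ = h * B := by simp

theorem sum_abs_fwdDiff_le_eVariationOn {ψ : ℝ → ℝ} {a : ℝ} {L : ℕ}
    (hbv : BoundedVariationOn ψ (Icc u v)) (hh : 0 ≤ h) (ha : u ≤ a) (haL : a + L * h ≤ v) :
    ∑ i ∈ Finset.range L, |fwdDiff h ψ (a + i * h)| ≤ (eVariationOn ψ (Icc u v)).toReal := by
  have hmono : MonotoneOn (fun i : ℕ => a + i * h) (Icc 0 L) := fun i _ j _ hij => by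
    have : (i : ℝ) ≤ j := by exact_mod_cast hij
    dsimp only; nlinarith
  have hmem : ∀ i ∈ Icc 0 L, a + i * h ∈ Icc u v := fun i hi => by
    have : (i : ℝ) ≤ L := by exact_mod_cast hi.2
    constructor <;> nlinarith
  have hsum := eVariationOn.sum_le_of_monotoneOn_Icc (f := ψ) hmono hmem
  rw [← ENNReal.ofReal_le_iff_le_toReal hbv,
    ENNReal.ofReal_sum_of_nonneg fun i _ => abs_nonneg _, Finset.range_eq_Ico]
  refine le_of_eq_of_le (Finset.sum_congr rfl fun i _ => ?_) hsum
  rw [edist_dist, Real.dist_eq, fwdDiff]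
  push_cast
  ring_nf

theorem sum_abs_fwdDiff_iter_le (m : ℕ) {ψ : ℝ → ℝ} {a : ℝ} {L : ℕ}
    (hdiff : ∀ j < m, DifferentiableOn ℝ (iteratedDerivWithin j ψ (Icc u v)) (Icc u v))
    (hbv : BoundedVariationOn (iteratedDerivWithin m ψ (Icc u v)) (Icc u v))
    (hh : 0 ≤ h) (ha : u ≤ a) (haL : a + (L + m) * h ≤ v) :
    ∑ i ∈ Finset.range L, |(fwdDiff h)^[m + 1] ψ (a + i * h)| ≤
      h ^ m * (eVariationOn (iteratedDerivWithin m ψ (Icc u v)) (Icc u v)).toReal := by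
  induction m generalizing ψ a with
  | zero =>
    simp only [iteratedDerivWithin_zero] at hbv ⊢
    simpa using sum_abs_fwdDiff_le_eVariationOn hbv hh ha (by simpa using haL)
  | succ m ih =>
    set ψ' := derivWithin ψ (Icc u v)
    have hdiff' : ∀ j < m, DifferentiableOn ℝ (iteratedDerivWithin j ψ' (Icc u v)) (Icc u v) :=
      fun j hj => by simpa only [iteratedDerivWithin_succ'] using hdiff (j + 1) (by omega)
    rw [iteratedDerivWithin_succ'] at hbv ⊢
    have hψ : DifferentiableOn ℝ ψ (Icc u v) := by simpa using hdiff 0 (by omega)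
    have hψ' : IntegrableOn ψ' (Icc u v) := by
      cases m with
      | zero => simpa using hbv.integrableOn_Icc
      | succ m => simpa using (hdiff' 0 (by omega)).continuousOn.integrableOn_Icc
    push_cast at haL
    have hrepr : ∀ i ∈ Finset.range L, (fwdDiff h)^[m + 1 + 1] ψ (a + i * h) =
        ∫ s in (0 : ℝ)..h, (fwdDiff h)^[m + 1] ψ' (a + i * h + s) := fun i hi => by
      have hiL : (i : ℝ) + 1 ≤ L := by exact_mod_cast Finset.mem_range.1 hi
      rw [Function.iterate_succ_apply]
      refine fwdDiff_iter_eq_integral hψ' hh (by nlinarith) (by push_cast; nlinarith)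
        fun k hk => fwdDiff_eq_integral_derivWithin hψ hψ' hh (by nlinarith) ?_
      have : (k : ℝ) ≤ m + 1 := by exact_mod_cast hk
      nlinarith
    rw [Finset.sum_congr rfl fun i hi => congrArg abs (hrepr i hi), pow_succ', mul_assoc]
    refine sum_abs_intervalIntegral_le hh (fun i hi => ?_) fun t ht => ?_
    · have hiL : (i : ℝ) + 1 ≤ L := by exact_mod_cast Finset.mem_range.1 hi
      exact hψ'.intervalIntegrable_fwdDiff_iter hh (by nlinarith) (by push_cast; nlinarith)
    · convert ih hdiff' hbv (a := a + t) (by linarith [ht.1]) (by linarith [ht.2]) using 4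
      ring

end FwdDiffIntegral

theorem D1_mulVec_apply (M : ℕ) (g : Fin M → ℝ) (i : Fin (M - 1)) :
    (D1 M *ᵥ g) i = g ⟨i + 1, by omega⟩ - g ⟨i, by omega⟩ := by
  have hterm : ∀ j : Fin M, D1 M i j * g j =
      (if j = ⟨i + 1, by omega⟩ then g j else 0) - (if j = ⟨i, by omega⟩ then g j else 0) := by
    intro j
    simp only [D1, of_apply, Fin.ext_iff]
    split_ifs <;> first | (exfalso; omega) | ring
  simp only [mulVec, dotProduct, hterm, Finset.sum_sub_distrib, Finset.sum_ite_eq',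
    Finset.mem_univ, if_true]

theorem Dop_mulVec_apply (N m : ℕ) (ψ : ℝ → ℝ) (a h : ℝ) (i : Fin (N - m)) :
    (Dop N m *ᵥ fun t : Fin N => ψ (a + (t : ℕ) * h)) i =
      (fwdDiff h)^[m] ψ (a + (i : ℕ) * h) := by
  induction m with
  | zero =>
    obtain ⟨i, hi⟩ := i
    simp only [Dop, mulVec, dotProduct, of_apply, ite_mul, one_mul, zero_mul]
    rw [Fintype.sum_eq_single (⟨i, hi⟩ : Fin N) fun j hj => if_neg fun hij : i = j =>
      hj (Fin.ext hij.symm)]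
    simp
  | succ m ih =>
    show ((D1 (N - m) * Dop N m) *ᵥ _) i = _
    rw [← mulVec_mulVec, D1_mulVec_apply, ih, ih, Function.iterate_succ_apply']
    simp only [fwdDiff]
    push_cast
    ring_nf

theorem ktfMat_mulVec_apply {N d m : ℕ} (θ : (Fin d → Fin N) → ℝ) (j : Fin d) (i : Fin (N - m))
    (w : {l // l ≠ j} → Fin N) :
    (ktfMat N d m *ᵥ θ) ⟨j, (i, w)⟩ =
      (Dop N m *ᵥ fun t => θ ((Equiv.funSplitAt j (Fin N)).symm (t, w))) i := by
  simp only [mulVec, dotProduct, ktfMat, of_apply]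
  rw [← (Equiv.funSplitAt j (Fin N)).symm.sum_comp, Fintype.sum_prod_type]
  refine Finset.sum_congr rfl fun t _ => ?_
  have hsplit : ∀ (w' : {l // l ≠ j} → Fin N) (l : {l // l ≠ j}),
      (Equiv.funSplitAt j (Fin N)).symm (t, w') l = w' l := fun w' l => by simp [l.2]
  rw [Fintype.sum_eq_single w fun w' hw' => ?_]
  · simp [hsplit]
  · obtain ⟨l, hl⟩ := Function.ne_iff.1 hw'
    rw [Finset.prod_eq_zero (Finset.mem_univ l) (by simp [hsplit, Ne.symm hl]), mul_zero,
      zero_mul]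

theorem sum_abs_ktfMat_mulVec {N d m : ℕ} (θ : (Fin d → Fin N) → ℝ) :
    ∑ p, |(ktfMat N d m *ᵥ θ) p| = ∑ j, ∑ w : {l // l ≠ j} → Fin N,
      ∑ i, |(Dop N m *ᵥ fun t => θ ((Equiv.funSplitAt j (Fin N)).symm (t, w))) i| := by
  rw [Fintype.sum_sigma]
  refine Finset.sum_congr rfl fun j _ => ?_
  rw [Fintype.sum_prod_type, Finset.sum_comm]
  simp only [ktfMat_mulVec_apply]

theorem sum_abs_Dop_mulVec_le {N k : ℕ} {φ : ℝ → ℝ}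
    (hdiff : ∀ m < k, DifferentiableOn ℝ (iteratedDerivWithin m φ (Icc 0 1)) (Icc 0 1))
    (hbv : BoundedVariationOn (iteratedDerivWithin k φ (Icc 0 1)) (Icc 0 1)) :
    ∑ i, |(Dop N (k + 1) *ᵥ fun t : Fin N => φ (((t : ℕ) + 1 : ℝ) / N)) i| ≤
      (eVariationOn (iteratedDerivWithin k φ (Icc 0 1)) (Icc 0 1)).toReal := by
  rcases lt_or_ge N (k + 1) with hN | hN
  · have : IsEmpty (Fin (N - (k + 1))) := by rw [Nat.sub_eq_zero_of_le hN.le]; infer_instance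
    simp
  have hN1 : 1 ≤ N := (Nat.succ_pos k).trans_le hN
  have hN0 : (0 : ℝ) < N := by exact_mod_cast hN1
  have hsample : (fun t : Fin N => φ (((t : ℕ) + 1 : ℝ) / N)) =
      fun t : Fin N => φ (1 / N + (t : ℕ) * (1 / N)) := by
    funext t; ring_nf
  simp_rw [hsample, Dop_mulVec_apply]
  rw [Fin.sum_univ_eq_sum_range
    (fun i => |(fwdDiff (1 / (N : ℝ)))^[k + 1] φ (1 / N + i * (1 / N))|)]
  have hspan : 1 / (N : ℝ) + ((N - (k + 1) : ℕ) + k) * (1 / N) ≤ 1 := by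
    rw [Nat.cast_sub hN]; field_simp; push_cast; linarith
  have hstep : 1 / (N : ℝ) ≤ 1 := (div_le_one hN0).2 (by exact_mod_cast hN1)
  calc _ ≤ (1 / (N : ℝ)) ^ k *
        (eVariationOn (iteratedDerivWithin k φ (Icc 0 1)) (Icc 0 1)).toReal :=
        sum_abs_fwdDiff_iter_le k hdiff hbv (by positivity) (by positivity) hspan
    _ ≤ _ := mul_le_of_le_one_left ENNReal.toReal_nonneg (pow_le_one₀ (by positivity) hstep)

theorem ktv_continuous_to_discrete_general (k d : ℕ) :
    ∃ c₁ : ℝ, 0 < c₁ ∧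
      ∀ N : ℕ, k + 1 < N → ∀ C : ℝ, 0 < C →
      ∀ f : (Fin d → ℝ) → ℝ,
        (∀ (j : Fin d) (w : {l : Fin d // l ≠ j} → Fin N), ∀ m < k,
          DifferentiableOn ℝ
            (iteratedDerivWithin m
              (fun t => f (fun l => if h : l = j then t else ((w ⟨l, h⟩ : ℕ) + 1 : ℝ) / N))
              (Set.Icc (0:ℝ) 1)) (Set.Icc (0:ℝ) 1)) →
        (∑ j : Fin d, ∑ w : {l : Fin d // l ≠ j} → Fin N,
            eVariationOn
              (iteratedDerivWithin k
                (fun t => f (fun l => if h : l = j then t else ((w ⟨l, h⟩ : ℕ) + 1 : ℝ) / N))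
                (Set.Icc (0:ℝ) 1))
              (Set.Icc (0:ℝ) 1)) ≤ ENNReal.ofReal C →
        ∑ p, |(ktfMat N d (k + 1)).mulVec
            (fun x : Fin d → Fin N => f (fun l => ((x l : ℕ) + 1 : ℝ) / N)) p| ≤
          c₁ * C := by
  refine ⟨1, one_pos, fun N _ C hC f hdiff hvar => ?_⟩
  have hbv := ne_top_of_le_ne_top ENNReal.ofReal_ne_top hvar
  simp only [ENNReal.sum_ne_top, Finset.mem_univ, true_implies] at hbv
  rw [sum_abs_ktfMat_mulVec, one_mul]
  refine le_trans ?_ (ENNReal.toReal_le_of_le_ofReal hC.le hvar)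
  rw [ENNReal.toReal_sum fun j _ => ENNReal.sum_ne_top.2 fun w _ => hbv j w]
  gcongr with j _
  rw [ENNReal.toReal_sum fun w _ => hbv j w]
  gcongr with w _
  refine le_of_eq_of_le ?_ (sum_abs_Dop_mulVec_le (N := N) (hdiff j w) (hbv j w))
  congr! 6 with _ _ t l
  rw [Equiv.funSplitAt_symm_apply]
  split_ifs <;> rfl

/-- Lemma: functions with bounded continuum KTV have lattice
evaluations with bounded discrete KTV.  If every axis-parallel univariate slice of
`f : [0,1]^d → ℝ` through the lattice is `k` times differentiable and the total sum of
the total variations of the `k`-th derivatives of these slices is at most `C`, then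
the lattice evaluation `θ_f` of `f` satisfies `‖D_{n,d}^{(k+1)} θ_f‖₁ ≤ c₁ C`, for a
constant `c₁ > 0` depending only on `k, d`. -/
theorem ktv_continuous_to_discrete (k d : ℕ) (hd : 1 ≤ d) :
    ∃ c₁ : ℝ, 0 < c₁ ∧
      ∀ N : ℕ, k + 1 < N → ∀ C : ℝ, 0 < C →
      ∀ f : (Fin d → ℝ) → ℝ,
        (∀ (j : Fin d) (w : {l : Fin d // l ≠ j} → Fin N), ∀ m < k,
          DifferentiableOn ℝ
            (iteratedDerivWithin m
              (fun t => f (fun l => if h : l = j then t else ((w ⟨l, h⟩ : ℕ) + 1 : ℝ) / N))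
              (Set.Icc (0:ℝ) 1)) (Set.Icc (0:ℝ) 1)) →
        (∑ j : Fin d, ∑ w : {l : Fin d // l ≠ j} → Fin N,
            eVariationOn
              (iteratedDerivWithin k
                (fun t => f (fun l => if h : l = j then t else ((w ⟨l, h⟩ : ℕ) + 1 : ℝ) / N))
                (Set.Icc (0:ℝ) 1))
              (Set.Icc (0:ℝ) 1)) ≤ ENNReal.ofReal C →
        ∑ p, |(ktfMat N d (k + 1)).mulVec
            (fun x : Fin d → Fin N => f (fun l => ((x l : ℕ) + 1 : ℝ) / N)) p| ≤
          c₁ * C :=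
  ktv_continuous_to_discrete_general k d
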